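/- Let a, b ≥ 1 and let R be a Hermitian operator on ℂ^a ⊗ ℂ^b with trace 1. Then there exist finitely many unit vectors u_j ∈ ℂ^a and v_j ∈ ℂ^b and real numbers P_j with Σ_j P_j = 1 such that R = Σ_j P_j (|u_j⟩⟨u_j| ⊗ |v_j⟩⟨v_j|). -/

import Mathlib

/-!
The complex span of the pure states |u⟩⟨u| (u a unit vector) is the whole matrix algebra: by
polarization every rank-one |x⟩⟨y| is a complex combination of four of them, and the matrix
units are rank one. Kronecker products of two spanning families span the bipartite matrix algebra,
so R is a complex combination of product pure states. These are Hermitian, so taking real parts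
turns this into a real combination when R is Hermitian, and comparing traces gives Σ Pⱼ = 1.
-/

open Matrix
open scoped Kronecker

open ComplexStarModule in
theorem Submodule.mem_span_real_of_isSelfAdjoint {A : Type*} [AddCommGroup A] [Module ℂ A]
    [StarAddMonoid A] [StarModule ℂ A] {S : Set A} (hS : ∀ s ∈ S, IsSelfAdjoint s) {x : A}
    (hx : IsSelfAdjoint x) (h : x ∈ span ℂ S) : x ∈ span ℝ S := by
  suffices ∀ y ∈ span ℂ S, (ℜ y : A) ∈ span ℝ S ∧ (ℑ y : A) ∈ span ℝ S by
    simpa only [hx.coe_realPart] using (this x h).1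
  intro y hy
  induction hy using span_induction with
  | mem s hs => simpa [(hS s hs).coe_realPart, (hS s hs).imaginaryPart] using subset_span hs
  | zero => simp
  | add y z _ _ hy hz => simpa using ⟨add_mem hy.1 hz.1, add_mem hy.2 hz.2⟩
  | smul c y _ hy =>
    simp only [realPart_smul, imaginaryPart_smul, AddSubgroupClass.coe_sub,
      AddMemClass.coe_add, selfAdjoint.val_smul]
    exact ⟨sub_mem (smul_mem _ _ hy.1) (smul_mem _ _ hy.2),
      add_mem (smul_mem _ _ hy.2) (smul_mem _ _ hy.1)⟩

namespace Matrix

theorem vecMulVec_star_polarization {n : Type*} (x y : n → ℂ) :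
    (4 : ℂ) • vecMulVec x (star y) =
      vecMulVec (x + y) (star (x + y)) - vecMulVec (x - y) (star (x - y)) +
        Complex.I • vecMulVec (x + Complex.I • y) (star (x + Complex.I • y)) -
        Complex.I • vecMulVec (x - Complex.I • y) (star (x - Complex.I • y)) := by
  ext i j
  simp only [smul_apply, sub_apply, add_apply, vecMulVec_apply, Pi.add_apply, Pi.sub_apply,
    Pi.smul_apply, Pi.star_apply, star_add, star_sub, star_smul, smul_eq_mul, Complex.star_def,
    Complex.conj_I]
  linear_combination
    (2 * x i * (starRingEnd ℂ) (y j) - 2 * y i * (starRingEnd ℂ) (x j)) * Complex.I_sq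

theorem span_image2_kronecker_eq_top {R l m n p : Type*} [CommSemiring R]
    [Fintype l] [Fintype m] [Fintype n] [Fintype p]
    [DecidableEq l] [DecidableEq m] [DecidableEq n] [DecidableEq p]
    {s : Set (Matrix l m R)} {t : Set (Matrix n p R)}
    (hs : Submodule.span R s = ⊤) (ht : Submodule.span R t = ⊤) :
    Submodule.span R (Set.image2 (· ⊗ₖ ·) s t) = ⊤ := by
  change Submodule.span R
    (Set.image2 (fun x y => kroneckerBilinear (R := R) (α := R) x y) s t) = ⊤
  rw [← Submodule.map₂_span_span, hs, ht, eq_top_iff,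
    ← (stdBasis R (l × n) (m × p)).span_eq, Submodule.span_le]
  rintro _ ⟨⟨⟨i₁, i₂⟩, ⟨j₁, j₂⟩⟩, rfl⟩
  rw [stdBasis_eq_single, ← mul_one (1 : R), ← single_kronecker_single]
  exact Submodule.apply_mem_map₂ _ Submodule.mem_top Submodule.mem_top

def pureStates (n : Type*) [Fintype n] : Set (Matrix n n ℂ) :=
  {ρ | ∃ u : n → ℂ, ∑ i, ‖u i‖ ^ 2 = 1 ∧ vecMulVec u (star u) = ρ}

variable {n : Type*} [Fintype n]

theorem trace_vecMulVec_star_self {u : n → ℂ} (hu : ∑ i, ‖u i‖ ^ 2 = 1) :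
    (vecMulVec u (star u)).trace = 1 := by
  simp [dotProduct, RCLike.mul_conj, ← Complex.ofReal_pow, ← Complex.ofReal_sum, hu]

theorem vecMulVec_star_self_mem_span_pureStates (u : n → ℂ) :
    vecMulVec u (star u) ∈ Submodule.span ℂ (pureStates n) := by
  rcases eq_or_ne u 0 with rfl | hu
  · simp
  obtain ⟨i₀, hi₀⟩ := Function.ne_iff.1 hu
  have hr : 0 < ∑ i, ‖u i‖ ^ 2 := Finset.sum_pos' (fun i _ => by positivity)
    ⟨i₀, Finset.mem_univ _, pow_pos (norm_pos_iff.2 hi₀) 2⟩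
  set c := √(∑ i, ‖u i‖ ^ 2)
  have hc : 0 < c := Real.sqrt_pos.2 hr
  have hunit : ∑ i, ‖(c⁻¹ • u) i‖ ^ 2 = 1 := by
    simp only [Pi.smul_apply, norm_smul, mul_pow, ← Finset.mul_sum, Real.norm_eq_abs,
      abs_of_pos (inv_pos.2 hc), inv_pow, Real.sq_sqrt hr.le, c]
    exact inv_mul_cancel₀ hr.ne'
  have hscale :
      vecMulVec u (star u) = (c * c) • vecMulVec (c⁻¹ • u) (star (c⁻¹ • u)) := by
    rw [star_smul, star_trivial c⁻¹, smul_vecMulVec, vecMulVec_smul, smul_smul, smul_smul,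
      mul_inv_cancel_right₀ hc.ne', mul_inv_cancel₀ hc.ne', one_smul]
  rw [hscale]
  exact Submodule.smul_of_tower_mem _ _ (Submodule.subset_span ⟨_, hunit, rfl⟩)

theorem vecMulVec_star_mem_span_pureStates (x y : n → ℂ) :
    vecMulVec x (star y) ∈ Submodule.span ℂ (pureStates n) := by
  have h4 : (4 : ℂ) • vecMulVec x (star y) ∈ Submodule.span ℂ (pureStates n) := by
    rw [vecMulVec_star_polarization]
    refine sub_mem (add_mem (sub_mem ?_ ?_) (Submodule.smul_mem _ _ ?_))
      (Submodule.smul_mem _ _ ?_) <;>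
    exact vecMulVec_star_self_mem_span_pureStates _
  simpa using Submodule.smul_mem _ (4⁻¹ : ℂ) h4

theorem span_pureStates [DecidableEq n] : Submodule.span ℂ (pureStates n) = ⊤ := by
  rw [eq_top_iff, ← (stdBasis ℂ n n).span_eq, Submodule.span_le]
  rintro _ ⟨⟨i, j⟩, rfl⟩
  rw [stdBasis_eq_single, single_eq_single_vecMulVec_single]
  simpa using vecMulVec_star_mem_span_pureStates (Pi.single i (1 : ℂ)) (Pi.single j 1)

theorem isSelfAdjoint_of_mem_image2_kronecker_pureStates {m : Type*} [Fintype m]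
    {ρ : Matrix (m × n) (m × n) ℂ}
    (hρ : ρ ∈ Set.image2 (· ⊗ₖ ·) (pureStates m) (pureStates n)) : IsSelfAdjoint ρ := by
  obtain ⟨_, ⟨u, -, rfl⟩, _, ⟨v, -, rfl⟩, rfl⟩ := hρ
  rw [IsSelfAdjoint, star_eq_conjTranspose, conjTranspose_kronecker, conjTranspose_vecMulVec,
    conjTranspose_vecMulVec, star_star, star_star]

theorem exists_sum_kronecker_of_mem_span_pureStates {m : Type*} [Fintype m]
    {R : Matrix (m × n) (m × n) ℂ}
    (h : R ∈ Submodule.span ℝ (Set.image2 (· ⊗ₖ ·) (pureStates m) (pureStates n))) :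
    ∃ (k : ℕ) (u : Fin k → m → ℂ) (v : Fin k → n → ℂ) (P : Fin k → ℝ),
      (∀ j, ∑ i, ‖u j i‖ ^ 2 = 1) ∧ (∀ j, ∑ i, ‖v j i‖ ^ 2 = 1) ∧
      R = ∑ j, (P j : ℂ) •
        (vecMulVec (u j) (star (u j)) ⊗ₖ vecMulVec (v j) (star (v j))) := by
  obtain ⟨k, P, g, rfl⟩ := Submodule.mem_span_set'.1 h
  choose x hx y hy hxy using fun j => (g j).2
  choose u hu hxu using hx
  choose v hv hyv using hy
  refine ⟨k, u, v, P, hu, hv, Finset.sum_congr rfl fun j _ => ?_⟩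
  rw [Complex.coe_smul, hxu, hyv, ← hxy j]

end Matrix

theorem herm1_quasiProb_separable_expansion_general
    (a b : ℕ)
    (R : Matrix (Fin a × Fin b) (Fin a × Fin b) ℂ)
    (hHerm : R.IsHermitian) (hTr : R.trace = 1) :
    ∃ (k : ℕ) (u : Fin k → Fin a → ℂ) (v : Fin k → Fin b → ℂ) (P : Fin k → ℝ),
      (∀ j, ∑ i, ‖u j i‖ ^ 2 = 1) ∧
      (∀ j, ∑ i, ‖v j i‖ ^ 2 = 1) ∧
      (∑ j, P j = 1) ∧
      R = ∑ j, (P j : ℂ) •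
          (vecMulVec (u j) (star (u j)) ⊗ₖ vecMulVec (v j) (star (v j))) := by
  have hspan : R ∈ Submodule.span ℂ
      (Set.image2 (· ⊗ₖ ·) (pureStates (Fin a)) (pureStates (Fin b))) := by
    rw [span_image2_kronecker_eq_top span_pureStates span_pureStates]
    exact Submodule.mem_top
  obtain ⟨k, u, v, P, hu, hv, rfl⟩ := exists_sum_kronecker_of_mem_span_pureStates
    (Submodule.mem_span_real_of_isSelfAdjoint
      (fun _ => isSelfAdjoint_of_mem_image2_kronecker_pureStates) hHerm hspan)
  refine ⟨k, u, v, P, hu, hv, ?_, rfl⟩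
  simp only [trace_sum, trace_smul, trace_kronecker, trace_vecMulVec_star_self (hu _),
    trace_vecMulVec_star_self (hv _), mul_one, smul_eq_mul] at hTr
  exact_mod_cast hTr

/-- quasi-probability separable expansion: every Hermitian
trace-one operator on `ℂ^a ⊗ ℂ^b` is a quasi-probabilistic mixture of
tensor products of pure-state projections. -/
theorem herm1_quasiProb_separable_expansion
    (a b : ℕ) (ha : 1 ≤ a) (hb : 1 ≤ b)
    (R : Matrix (Fin a × Fin b) (Fin a × Fin b) ℂ)
    (hHerm : R.IsHermitian) (hTr : R.trace = 1) :
    ∃ (k : ℕ) (u : Fin k → Fin a → ℂ) (v : Fin k → Fin b → ℂ) (P : Fin k → ℝ),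
      (∀ j, ∑ i, ‖u j i‖ ^ 2 = 1) ∧
      (∀ j, ∑ i, ‖v j i‖ ^ 2 = 1) ∧
      (∑ j, P j = 1) ∧
      R = ∑ j, (P j : ℂ) •
          (vecMulVec (u j) (star (u j)) ⊗ₖ vecMulVec (v j) (star (v j))) :=
  herm1_quasiProb_separable_expansion_general a b R hHerm hTr
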